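/- arXiv:2504.02974 — 8 statements merged into one kernel-verified Lean document; each statement's English description precedes it below -/
import Mathlib

section
/- Let X = ℝ, σ > 0, and let P be the set of probability measures on ℝ with mean 0 and second moment at most σ². For real numbers α, β with σ²α² + (2β - 1)² ≤ 1, the function e(x) = 1 + αx + β(x²/σ² - 1) is nonnegative for all x ∈ ℝ and satisfies ∫ e dμ ≤ 1 for every μ ∈ P. -/
/-!
Since `4β(1 - β) = 1 - (2β - 1)²`, the constraint says `0 ≤ β ≤ 1` and that the quadratic
`σ² e(x) = β x² + ασ² x + (1 - β)σ²` has discriminant `σ²(σ²α² + (2β - 1)² - 1) ≤ 0`, so `e ≥ 0`.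
Under a centred `μ`, `∫ e dμ = 1 + β (∫ x² dμ / σ² - 1) ≤ 1` because `β ≥ 0`.
-/

open MeasureTheory

theorem quadratic_nonneg_of_discrim_nonpos {K : Type*} [Field K] [LinearOrder K]
    [IsStrictOrderedRing K] {a b c : K} (ha : 0 ≤ a) (hc : 0 ≤ c) (h : discrim a b c ≤ 0)
    (x : K) : 0 ≤ a * (x * x) + b * x + c := by
  rcases ha.eq_or_lt with rfl | ha
  · have hb : b = 0 := pow_eq_zero_iff two_ne_zero |>.mp <|
      le_antisymm (by simpa [discrim] using h) (sq_nonneg b)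
    simpa [hb] using hc
  · have key : 4 * a * (a * (x * x) + b * x + c) = (2 * a * x + b) ^ 2 - discrim a b c := by
      rw [discrim]; ring
    have : 0 ≤ 4 * a * (a * (x * x) + b * x + c) := by
      rw [key]; linarith [sq_nonneg (2 * a * x + b)]
    exact nonneg_of_mul_nonneg_right this (by positivity)

theorem one_add_mul_add_mul_sq_div_sub_one_nonneg {σ α β : ℝ} (hσ : 0 < σ)
    (hαβ : σ ^ 2 * α ^ 2 + (2 * β - 1) ^ 2 ≤ 1) (x : ℝ) :
    0 ≤ 1 + α * x + β * (x ^ 2 / σ ^ 2 - 1) := by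
  have hσ₂ : 0 < σ ^ 2 := by positivity
  have hβ₀ : 0 ≤ β := by nlinarith [sq_nonneg (σ * α)]
  have hβ₁ : β ≤ 1 := by nlinarith [sq_nonneg (σ * α)]
  have hdiscrim : discrim β (α * σ ^ 2) ((1 - β) * σ ^ 2) ≤ 0 := by
    have : discrim β (α * σ ^ 2) ((1 - β) * σ ^ 2) =
        σ ^ 2 * (σ ^ 2 * α ^ 2 + (2 * β - 1) ^ 2 - 1) := by
      rw [discrim]; ring
    rw [this]
    exact mul_nonpos_of_nonneg_of_nonpos hσ₂.le (by linarith)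
  have hquad := quadratic_nonneg_of_discrim_nonpos hβ₀
    (mul_nonneg (sub_nonneg.mpr hβ₁) hσ₂.le) hdiscrim x
  have : 1 + α * x + β * (x ^ 2 / σ ^ 2 - 1) =
      (β * (x * x) + α * σ ^ 2 * x + (1 - β) * σ ^ 2) / σ ^ 2 := by
    field_simp; ring
  rw [this]
  exact div_nonneg hquad hσ₂.le

theorem integral_one_add_mul_add_mul_sq_div_sub_one {μ : Measure ℝ} [IsProbabilityMeasure μ]
    (h₁ : Integrable (fun x : ℝ => x) μ) (h₂ : Integrable (fun x : ℝ => x ^ 2) μ) (s α β : ℝ) :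
    ∫ x, (1 + α * x + β * (x ^ 2 / s - 1)) ∂μ =
      1 + α * ∫ x, x ∂μ + β * ((∫ x, x ^ 2 ∂μ) / s - 1) := by
  have h₁' : Integrable (fun x : ℝ => 1 + α * x) μ := (integrable_const 1).add (h₁.const_mul α)
  have h₂' : Integrable (fun x : ℝ => x ^ 2 / s) μ := h₂.div_const s
  have h₃ : Integrable (fun x : ℝ => β * (x ^ 2 / s - 1)) μ :=
    (h₂'.sub (integrable_const 1)).const_mul β
  rw [integral_add h₁' h₃, integral_add (integrable_const 1) (h₁.const_mul α),
    integral_const_mul, integral_const_mul, integral_sub h₂' (integrable_const 1), integral_div]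
  simp

/-- For the class of zero-mean distributions with second moment at most `σ²`, every function
`e(x) = 1 + αx + β(x²/σ² - 1)` with `σ²α² + (2β - 1)² ≤ 1` is nonnegative and is an
e-variable. -/
theorem stmt_2 (σ : ℝ) (hσ : 0 < σ) (α β : ℝ)
    (hαβ : σ ^ 2 * α ^ 2 + (2 * β - 1) ^ 2 ≤ 1) :
    (∀ x : ℝ, 0 ≤ 1 + α * x + β * (x ^ 2 / σ ^ 2 - 1)) ∧
    ∀ μ : Measure ℝ, IsProbabilityMeasure μ →
      Integrable (fun x : ℝ => x) μ → (∫ x, x ∂μ) = 0 →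
      Integrable (fun x : ℝ => x ^ 2) μ → (∫ x, x ^ 2 ∂μ) ≤ σ ^ 2 →
      ∫ x, (1 + α * x + β * (x ^ 2 / σ ^ 2 - 1)) ∂μ ≤ 1 := by
  refine ⟨one_add_mul_add_mul_sq_div_sub_one_nonneg hσ hαβ, fun μ _ h₁ hmean h₂ hvar => ?_⟩
  have hβ : 0 ≤ β := by nlinarith [sq_nonneg (σ * α)]
  have hmoment : (∫ x, x ^ 2 ∂μ) / σ ^ 2 ≤ 1 := div_le_one_of_le₀ hvar (by positivity)
  rw [integral_one_add_mul_add_mul_sq_div_sub_one h₁ h₂, hmean]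
  linarith [mul_nonpos_of_nonneg_of_nonpos hβ (sub_nonpos.mpr hmoment)]
end

section
/- Every sub-ψ distribution is concentrated on dom(ψ*): if μ is a probability measure on ℝ with ∫ e^{λx} μ(dx) ≤ e^{ψ(λ)} for all λ ∈ dom(ψ), then μ(dom(ψ*)) = 1, where dom(ψ*) = {x : ψ*(x) < ∞}. -/
open MeasureTheory Set Filter Topology
open scoped ENNReal

/- A sub-`ψ` bound at a slope `l ≥ 0` gives the Chernoff tail bound `μ [y, ∞) ≤ e^{ψ(l) - l y}`,
so `ψ*(y) = ∞` forces `μ [y, ∞) = 0`. The set `{ψ* = ∞}` is covered by countably many of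
these null half-lines, since on `ℝ` the union of the open half-lines `(y, ∞)` is already
attained by countably many `y`, and at most one point (a least element) is missed. -/

noncomputable def convexConjugate (ψ : ℝ → ℝ≥0∞) (x : ℝ) : EReal :=
  ⨆ l : ℝ, ((l * x : ℝ) : EReal) - ((ψ l : ℝ≥0∞) : EReal)

theorem exists_countable_subset_subset_biUnion_Ici {α : Type*} [LinearOrder α]
    [TopologicalSpace α] [OrderTopology α] [SecondCountableTopology α] (A : Set α) :
    ∃ T ⊆ A, T.Countable ∧ A ⊆ ⋃ y ∈ T, Ici y := by
  obtain ⟨T, hTA, hT, hTU⟩ := TopologicalSpace.isOpen_biUnion_countable A Ioi fun _ _ => isOpen_Ioi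
  have hmin : (A ∩ lowerBounds A).Subsingleton := fun x hx z hz =>
    le_antisymm (hx.2 hz.1) (hz.2 hx.1)
  refine ⟨T ∪ A ∩ lowerBounds A, union_subset hTA inter_subset_left,
    hT.union hmin.countable, fun x hx => ?_⟩
  by_cases hxlow : x ∈ lowerBounds A
  · exact mem_biUnion (Or.inr ⟨hx, hxlow⟩) self_mem_Ici
  · obtain ⟨y, hyA, hyx⟩ : ∃ y ∈ A, y < x := by simpa [lowerBounds] using hxlow
    have : x ∈ ⋃ y ∈ T, Ioi y := hTU ▸ mem_biUnion hyA hyx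
    obtain ⟨z, hzT, hzx⟩ := mem_iUnion₂.1 this
    exact mem_biUnion (Or.inl hzT) (le_of_lt hzx)

theorem measure_eq_zero_of_forall_measure_Ici_eq_zero {α : Type*} [LinearOrder α]
    [TopologicalSpace α] [OrderTopology α] [SecondCountableTopology α] [MeasurableSpace α]
    {μ : Measure α} {A : Set α} (h : ∀ y ∈ A, μ (Ici y) = 0) : μ A = 0 := by
  obtain ⟨T, hTA, hT, hcover⟩ := exists_countable_subset_subset_biUnion_Ici A
  exact measure_mono_null hcover ((measure_biUnion_null_iff hT).2 fun y hy => h y (hTA hy))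

theorem measure_Ici_le_exp_of_lintegral_exp_le {μ : Measure ℝ} {l c : ℝ} (hl : 0 ≤ l)
    (h : ∫⁻ x, ENNReal.ofReal (Real.exp (l * x)) ∂μ ≤ ENNReal.ofReal (Real.exp c)) (y : ℝ) :
    μ (Ici y) ≤ ENNReal.ofReal (Real.exp (c - l * y)) := by
  have hmeas : Measurable fun x : ℝ => ENNReal.ofReal (Real.exp (l * x)) := by fun_prop
  have hsubset :
      Ici y ⊆ {x | ENNReal.ofReal (Real.exp (l * y)) ≤ ENNReal.ofReal (Real.exp (l * x))} :=
    fun x hx => ENNReal.ofReal_le_ofReal (Real.exp_le_exp.2 (mul_le_mul_of_nonneg_left hx hl))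
  calc μ (Ici y)
      ≤ (∫⁻ x, ENNReal.ofReal (Real.exp (l * x)) ∂μ) / ENNReal.ofReal (Real.exp (l * y)) :=
        (measure_mono hsubset).trans
          (meas_ge_le_lintegral_div hmeas.aemeasurable (by simp [Real.exp_pos]) (by simp))
    _ ≤ ENNReal.ofReal (Real.exp c) / ENNReal.ofReal (Real.exp (l * y)) :=
        ENNReal.div_le_div_right h _
    _ = ENNReal.ofReal (Real.exp (c - l * y)) := by
        rw [← ENNReal.ofReal_div_of_pos (Real.exp_pos _), Real.exp_sub]

theorem EReal.ne_top_and_lt_of_coe_lt_coe_sub_coe_ennreal {r a : ℝ} {b : ℝ≥0∞}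
    (h : (r : EReal) < (a : EReal) - (b : EReal)) : b ≠ ⊤ ∧ r < a - b.toReal := by
  lift b to NNReal using (by rintro rfl; simp at h)
  rw [EReal.coe_nnreal_eq_coe_real] at h
  exact ⟨ENNReal.coe_ne_top, by exact_mod_cast h⟩

theorem measure_Ici_eq_zero_of_convexConjugate_eq_top {ψ : ℝ → ℝ≥0∞}
    (hneg : ∀ l : ℝ, l < 0 → ψ l = ⊤) {μ : Measure ℝ}
    (hsub : ∀ l : ℝ, ψ l ≠ ⊤ →
      ∫⁻ x, ENNReal.ofReal (Real.exp (l * x)) ∂μ ≤ ENNReal.ofReal (Real.exp ((ψ l).toReal)))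
    {y : ℝ} (hy : convexConjugate ψ y = ⊤) : μ (Ici y) = 0 := by
  have hbound : ∀ r : ℝ, μ (Ici y) ≤ ENNReal.ofReal (Real.exp (-r)) := by
    intro r
    obtain ⟨l, hl⟩ := lt_iSup_iff.1 (hy ▸ EReal.coe_lt_top r : (r : EReal) < convexConjugate ψ y)
    obtain ⟨hψl, hrl⟩ := EReal.ne_top_and_lt_of_coe_lt_coe_sub_coe_ennreal hl
    have hl0 : 0 ≤ l := not_lt.1 fun h => hψl (hneg l h)
    exact (measure_Ici_le_exp_of_lintegral_exp_le hl0 (hsub l hψl) y).trans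
      (ENNReal.ofReal_le_ofReal (Real.exp_le_exp.2 (by linarith)))
  have hlim : Tendsto (fun r : ℝ => ENNReal.ofReal (Real.exp (-r))) atTop (𝓝 0) := by
    simpa using ENNReal.tendsto_ofReal (Real.tendsto_exp_atBot.comp tendsto_neg_atTop_atBot)
  exact le_antisymm (ge_of_tendsto' hlim hbound) zero_le

theorem stmt_8_general (ψ : ℝ → ℝ≥0∞)
    (hneg : ∀ l : ℝ, l < 0 → ψ l = ⊤)
    (μ : Measure ℝ) [IsProbabilityMeasure μ]
    (hsub : ∀ l : ℝ, ψ l ≠ ⊤ →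
      ∫⁻ x, ENNReal.ofReal (Real.exp (l * x)) ∂μ ≤ ENNReal.ofReal (Real.exp ((ψ l).toReal))) :
    μ {x : ℝ | (⨆ l : ℝ, (((l * x : ℝ)) : EReal) - ((ψ l : ℝ≥0∞) : EReal)) ≠ ⊤} = 1 := by
  have hnull : μ {x | convexConjugate ψ x = ⊤} = 0 :=
    measure_eq_zero_of_forall_measure_Ici_eq_zero fun _ hy =>
      measure_Ici_eq_zero_of_convexConjugate_eq_top hneg hsub hy
  have hcover := measure_univ_le_add_compl (μ := μ) {x | convexConjugate ψ x ≠ ⊤}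
  rw [measure_univ, compl_ofPred] at hcover
  simp only [not_not, hnull, add_zero] at hcover
  exact le_antisymm prob_le_one hcover

/-- Every sub-`ψ` distribution is concentrated on the effective domain of the convex
conjugate `ψ*`: if `∫ e^{λx} μ(dx) ≤ e^{ψ(λ)}` for all `λ` in the domain of `ψ`, then
`μ({x : ψ*(x) < ∞}) = 1`. -/
theorem stmt_8 (ψ : ℝ → ℝ≥0∞) (hψ0 : ψ 0 = 0)
    (hneg : ∀ l : ℝ, l < 0 → ψ l = ⊤)
    (hitv : ∀ l₁ l₂ : ℝ, 0 ≤ l₁ → l₁ ≤ l₂ → ψ l₂ ≠ ⊤ → ψ l₁ ≠ ⊤)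
    (hpos : ∃ l : ℝ, 0 < l ∧ ψ l ≠ ⊤)
    (hconv : ∀ a b t : ℝ, 0 ≤ t → t ≤ 1 →
      ψ (t * a + (1 - t) * b) ≤ ENNReal.ofReal t * ψ a + ENNReal.ofReal (1 - t) * ψ b)
    (μ : Measure ℝ) [IsProbabilityMeasure μ]
    (hsub : ∀ l : ℝ, ψ l ≠ ⊤ →
      ∫⁻ x, ENNReal.ofReal (Real.exp (l * x)) ∂μ ≤ ENNReal.ofReal (Real.exp ((ψ l).toReal))) :
    μ {x : ℝ | (⨆ l : ℝ, (((l * x : ℝ)) : EReal) - ((ψ l : ℝ≥0∞) : EReal)) ≠ ⊤} = 1 :=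
  stmt_8_general ψ hneg μ hsub
end

section
/- For every x₀ in dom(ψ*) there exists y₀ ≥ 0 such that for any p ∈ [0, (1/2)e^{-ψ*(x₀)}] and y ≥ y₀, the probability measure ν = p·δ_{x₀} + (1-p)·δ_{-x₀-y} satisfies ∫ e^{λx} ν(dx) ≤ e^{ψ(λ)} for all λ ∈ dom(ψ). -/
open MeasureTheory
open scoped ENNReal

/- Young's inequality `λ x₀ ≤ ψ*(x₀) + ψ(λ)` and the mass bound `p ≤ ½ e^{-ψ*(x₀)}` cap the
contribution of the atom at `x₀` to the exponential moment at `½ e^{ψ(λ)}`. The far atom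
`b = -x₀ - y ≤ -4|x₀|` contributes at most `½` once `λ|b| ≥ log 2`; for smaller `λ ≥ 0` a first-order
expansion shows that its drift `-λ|b|/4` outweighs the drift `2pλ|x₀|` of the near atom, so the moment
is at most `1 ≤ e^{ψ(λ)}`. Negative `λ` lie outside `dom ψ`. -/

noncomputable def fenchelConj (ψ : ℝ → ℝ≥0∞) (x : ℝ) : EReal :=
  ⨆ l : ℝ, ((l * x : ℝ) : EReal) - (ψ l : EReal)

lemma fenchelConj_nonneg {ψ : ℝ → ℝ≥0∞} (hψ0 : ψ 0 = 0) (x : ℝ) : 0 ≤ fenchelConj ψ x := by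
  have := le_iSup (fun l : ℝ => ((l * x : ℝ) : EReal) - (ψ l : EReal)) 0
  simp only [zero_mul, hψ0, EReal.coe_zero, EReal.coe_ennreal_zero, sub_zero] at this
  exact this

lemma mul_le_fenchelConj_add {ψ : ℝ → ℝ≥0∞} {x l : ℝ} (hx : fenchelConj ψ x ≠ ⊤)
    (hl : ψ l ≠ ⊤) : l * x ≤ (fenchelConj ψ x).toReal + (ψ l).toReal := by
  have young : ((l * x - (ψ l).toReal : ℝ) : EReal) ≤ fenchelConj ψ x := by
    rw [EReal.coe_sub, EReal.coe_ennreal_toReal hl]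
    exact le_iSup (fun l : ℝ => ((l * x : ℝ) : EReal) - (ψ l : EReal)) l
  have := EReal.coe_le_coe_iff.mp (young.trans (EReal.le_coe_toReal hx))
  linarith

lemma Real.exp_le_one_add_two_mul {u : ℝ} (h0 : 0 ≤ u) (h1 : u ≤ 1) : Real.exp u ≤ 1 + 2 * u := by
  have := Real.abs_exp_sub_one_le (x := u) (by rwa [abs_of_nonneg h0])
  rw [abs_of_nonneg h0] at this
  linarith [le_abs_self (Real.exp u - 1)]

lemma Real.exp_neg_le_one_sub_half {v : ℝ} (h0 : 0 ≤ v) (h1 : v ≤ 1) :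
    Real.exp (-v) ≤ 1 - v / 2 := by
  rw [Real.exp_neg, inv_le_iff_one_le_mul₀ (Real.exp_pos v)]
  nlinarith [Real.add_one_le_exp v]

lemma two_point_exp_le_one {p a b l : ℝ} (hp0 : 0 ≤ p) (hp : p ≤ 1 / 2) (hb : b ≤ -(4 * |a|))
    (hl : 0 ≤ l) (hlb : -1 ≤ l * b) :
    p * Real.exp (l * a) + (1 - p) * Real.exp (l * b) ≤ 1 := by
  have hlb' : 4 * (l * |a|) ≤ -(l * b) := by nlinarith
  have hla : 0 ≤ l * |a| := by positivity
  have near : Real.exp (l * a) ≤ 1 + 2 * (l * |a|) :=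
    (Real.exp_le_exp.mpr (mul_le_mul_of_nonneg_left (le_abs_self a) hl)).trans
      (Real.exp_le_one_add_two_mul hla (by linarith))
  have far : Real.exp (l * b) ≤ 1 - (-(l * b)) / 2 := by
    simpa using Real.exp_neg_le_one_sub_half (v := -(l * b)) (by linarith) (by linarith)
  nlinarith [mul_le_mul_of_nonneg_left near hp0,
    mul_le_mul_of_nonneg_left far (by linarith : 0 ≤ 1 - p),
    mul_nonneg (by linarith : 0 ≤ 1 - 2 * p) hla,
    mul_nonneg (by linarith : 0 ≤ 1 / 2 - p) (by linarith : 0 ≤ -(l * b))]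

lemma two_point_exp_le_exp_of_le_neg_log_two {p a b l S B : ℝ} (hp0 : 0 ≤ p)
    (hp : p ≤ 1 / 2 * Real.exp (-S)) (hB : 0 ≤ B) (hla : l * a ≤ S + B)
    (hlb : l * b ≤ -Real.log 2) :
    p * Real.exp (l * a) + (1 - p) * Real.exp (l * b) ≤ Real.exp B := by
  have near : p * Real.exp (l * a) ≤ 1 / 2 * Real.exp B :=
    calc p * Real.exp (l * a) ≤ 1 / 2 * Real.exp (-S) * Real.exp (S + B) :=
          mul_le_mul hp (Real.exp_le_exp.mpr hla) (Real.exp_nonneg _) (by positivity)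
      _ = 1 / 2 * Real.exp B := by rw [mul_assoc, ← Real.exp_add]; ring_nf
  have far : Real.exp (l * b) ≤ 1 / 2 := by
    calc Real.exp (l * b) ≤ Real.exp (-Real.log 2) := Real.exp_le_exp.mpr hlb
      _ = 1 / 2 := by rw [Real.exp_neg, Real.exp_log two_pos, one_div]
  nlinarith [Real.one_le_exp hB, Real.exp_nonneg (l * b)]

lemma two_point_exp_le_exp {p a b l S B : ℝ} (hp0 : 0 ≤ p) (hS : 0 ≤ S)
    (hp : p ≤ 1 / 2 * Real.exp (-S)) (hB : 0 ≤ B) (hla : l * a ≤ S + B)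
    (hb : b ≤ -(4 * |a|)) (hl : 0 ≤ l) :
    p * Real.exp (l * a) + (1 - p) * Real.exp (l * b) ≤ Real.exp B := by
  have hp2 : p ≤ 1 / 2 := hp.trans (by linarith [Real.exp_le_one_iff.mpr (neg_nonpos.mpr hS)])
  rcases le_or_gt (l * b) (-Real.log 2) with htail | hnear
  · exact two_point_exp_le_exp_of_le_neg_log_two hp0 hp hB hla htail
  · exact (two_point_exp_le_one hp0 hp2 hb hl (by linarith [Real.log_two_lt_d9])).trans
      (Real.one_le_exp hB)

lemma lintegral_ofReal_two_point {p : ℝ} (hp0 : 0 ≤ p) (hp1 : p ≤ 1) {f : ℝ → ℝ} (hf : 0 ≤ f)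
    (a b : ℝ) :
    ∫⁻ x, ENNReal.ofReal (f x)
        ∂(ENNReal.ofReal p • Measure.dirac a + ENNReal.ofReal (1 - p) • Measure.dirac b)
      = ENNReal.ofReal (p * f a + (1 - p) * f b) := by
  rw [lintegral_add_measure, lintegral_smul_measure, lintegral_smul_measure, lintegral_dirac,
    lintegral_dirac, smul_eq_mul, smul_eq_mul, ← ENNReal.ofReal_mul hp0,
    ← ENNReal.ofReal_mul (sub_nonneg.mpr hp1),
    ← ENNReal.ofReal_add (mul_nonneg hp0 (hf a)) (mul_nonneg (sub_nonneg.mpr hp1) (hf b))]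

theorem stmt_10_general (ψ : ℝ → ℝ≥0∞) (hψ0 : ψ 0 = 0)
    (hneg : ∀ l : ℝ, l < 0 → ψ l = ⊤)
    (x₀ : ℝ)
    (hx₀ : (⨆ l : ℝ, (((l * x₀ : ℝ)) : EReal) - ((ψ l : ℝ≥0∞) : EReal)) ≠ ⊤) :
    ∃ y₀ : ℝ, 0 ≤ y₀ ∧ ∀ p : ℝ, 0 ≤ p →
      p ≤ (1 / 2) * Real.exp
        (-(⨆ l : ℝ, (((l * x₀ : ℝ)) : EReal) - ((ψ l : ℝ≥0∞) : EReal)).toReal) →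
      ∀ y : ℝ, y₀ ≤ y → ∀ l : ℝ, ψ l ≠ ⊤ →
        ∫⁻ x, ENNReal.ofReal (Real.exp (l * x))
          ∂(ENNReal.ofReal p • Measure.dirac x₀
            + ENNReal.ofReal (1 - p) • Measure.dirac (-x₀ - y))
          ≤ ENNReal.ofReal (Real.exp ((ψ l).toReal)) := by
  change fenchelConj ψ x₀ ≠ ⊤ at hx₀
  have hS : 0 ≤ (fenchelConj ψ x₀).toReal := EReal.toReal_nonneg (fenchelConj_nonneg hψ0 x₀)
  refine ⟨4 * |x₀| - x₀, by linarith [le_abs_self x₀, abs_nonneg x₀], ?_⟩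
  intro p hp0 hp y hy l hl
  change p ≤ 1 / 2 * Real.exp (-(fenchelConj ψ x₀).toReal) at hp
  have hp1 : p ≤ 1 := hp.trans (by nlinarith [Real.exp_le_one_iff.mpr (neg_nonpos.mpr hS)])
  have hl0 : 0 ≤ l := not_lt.mp fun h => hl (hneg l h)
  rw [lintegral_ofReal_two_point hp0 hp1 (fun x => (Real.exp_pos _).le)]
  exact ENNReal.ofReal_le_ofReal <| two_point_exp_le_exp hp0 hS hp ENNReal.toReal_nonneg
    (mul_le_fenchelConj_add hx₀ hl) (by linarith) hl0

/-- For every `x₀ ∈ dom(ψ*)` there exists `y₀ ≥ 0` such that for all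
`p ∈ [0, (1/2)e^{-ψ*(x₀)}]` and `y ≥ y₀`, the two-point measure
`ν = p·δ_{x₀} + (1-p)·δ_{-x₀-y}` is sub-`ψ`. -/
theorem stmt_10 (ψ : ℝ → ℝ≥0∞) (hψ0 : ψ 0 = 0)
    (hneg : ∀ l : ℝ, l < 0 → ψ l = ⊤)
    (hitv : ∀ l₁ l₂ : ℝ, 0 ≤ l₁ → l₁ ≤ l₂ → ψ l₂ ≠ ⊤ → ψ l₁ ≠ ⊤)
    (hpos : ∃ l : ℝ, 0 < l ∧ ψ l ≠ ⊤)
    (hconv : ∀ a b t : ℝ, 0 ≤ t → t ≤ 1 →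
      ψ (t * a + (1 - t) * b) ≤ ENNReal.ofReal t * ψ a + ENNReal.ofReal (1 - t) * ψ b)
    (x₀ : ℝ)
    (hx₀ : (⨆ l : ℝ, (((l * x₀ : ℝ)) : EReal) - ((ψ l : ℝ≥0∞) : EReal)) ≠ ⊤) :
    ∃ y₀ : ℝ, 0 ≤ y₀ ∧ ∀ p : ℝ, 0 ≤ p →
      p ≤ (1 / 2) * Real.exp
        (-(⨆ l : ℝ, (((l * x₀ : ℝ)) : EReal) - ((ψ l : ℝ≥0∞) : EReal)).toReal) →
      ∀ y : ℝ, y₀ ≤ y → ∀ l : ℝ, ψ l ≠ ⊤ →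
        ∫⁻ x, ENNReal.ofReal (Real.exp (l * x))
          ∂(ENNReal.ofReal p • Measure.dirac x₀
            + ENNReal.ofReal (1 - p) • Measure.dirac (-x₀ - y))
          ≤ ENNReal.ofReal (Real.exp ((ψ l).toReal)) :=
  stmt_10_general ψ hψ0 hneg x₀ hx₀
end

section
/- Let P be the set of sub-ψ probability measures on dom(ψ*). If f is a measurable function on dom(ψ*) with sup_x |f(x)|e^{-ψ*(x)} = ∞, then there exists μ ∈ P with ∫ |f| dμ = ∞. Equivalently, every function integrable under all sub-ψ distributions satisfies sup_x |f(x)|e^{-ψ*(x)} < ∞. -/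
/-!
Choose points `x n` with `|f (x n)| e^{-ψ*(x n)} ≥ 2^{n+2} e^{ψ(l₀)}`, where `0 < l₀ ∈ dom ψ`,
and put mass `2^{-(n+2)} e^{-ψ(l₀) - ψ*(x n)}` at `x n`: then `∫ |f|` diverges, while by
Fenchel–Young `e^{l x - ψ*(x)} ≤ e^{ψ(l)}` these atoms contribute at most `e^{ψ(l) - ψ(l₀)} / 2`
to `∫ e^{l x}`. The remaining mass sits at `-1/l₀`, where `e^{l x} ≤ e^{-1} < 1/2` for `l ≥ l₀`.
This gives the sub-`ψ` bound for `l ≥ l₀` and `∫ e^{l₀ x} ≤ 1`, and convexity of `l ↦ ∫ e^{l x}`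
extends `∫ e^{l x} ≤ 1 ≤ e^{ψ(l)}` to `0 ≤ l ≤ l₀`.
-/

open MeasureTheory
open scoped ENNReal

noncomputable def convexConj (ψ : ℝ → ℝ≥0∞) (x : ℝ) : EReal :=
  ⨆ l : ℝ, ((l * x : ℝ) : EReal) - (ψ l : EReal)

section convexConj

variable {ψ : ℝ → ℝ≥0∞}

theorem convexConj_nonneg (hψ0 : ψ 0 = 0) (x : ℝ) : 0 ≤ convexConj ψ x :=
  le_iSup_of_le 0 (by simp [hψ0])

theorem convexConj_nonpos (hneg : ∀ l : ℝ, l < 0 → ψ l = ⊤) {x : ℝ} (hx : x ≤ 0) :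
    convexConj ψ x ≤ 0 := by
  refine iSup_le fun l => ?_
  rcases lt_or_ge l 0 with hl | hl
  · simp [hneg l hl]
  · calc ((l * x : ℝ) : EReal) - (ψ l : EReal) ≤ ((l * x : ℝ) : EReal) - 0 :=
          EReal.sub_le_sub le_rfl (EReal.coe_ennreal_nonneg _)
      _ ≤ 0 := by rw [sub_zero]; exact_mod_cast mul_nonpos_of_nonneg_of_nonpos hl hx

theorem mul_le_toReal_add_toReal_convexConj {l x : ℝ} (hl : ψ l ≠ ⊤)
    (hx : convexConj ψ x ≠ ⊤) : l * x ≤ (ψ l).toReal + (convexConj ψ x).toReal := by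
  have h : (((l * x - (ψ l).toReal : ℝ)) : EReal) ≤ convexConj ψ x := by
    rw [EReal.coe_sub, EReal.coe_ennreal_toReal hl]
    exact le_iSup (fun l : ℝ => ((l * x : ℝ) : EReal) - (ψ l : EReal)) l
  have := EReal.toReal_le_toReal h (EReal.coe_ne_bot _) hx
  rw [EReal.toReal_coe] at this
  linarith

end convexConj

theorem ENNReal.tsum_le_of_le_two_inv_pow_succ_mul {u : ℕ → ℝ≥0∞} {c : ℝ≥0∞}
    (h : ∀ n, u n ≤ 2⁻¹ ^ (n + 1) * c) : ∑' n, u n ≤ c := by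
  calc ∑' n, u n ≤ ∑' n : ℕ, 2⁻¹ ^ (n + 1) * c := ENNReal.tsum_le_tsum h
    _ = c := by
      rw [ENNReal.tsum_mul_right, ENNReal.tsum_geometric_add_one, ENNReal.one_sub_inv_two,
        inv_inv, ENNReal.inv_mul_cancel two_ne_zero ENNReal.ofNat_ne_top, one_mul]

theorem lintegral_exp_mul_le_one_of_le_one {μ : Measure ℝ} [IsProbabilityMeasure μ]
    {l t : ℝ} (ht0 : 0 ≤ t) (ht1 : t ≤ 1)
    (h : ∫⁻ z, ENNReal.ofReal (Real.exp (l * z)) ∂μ ≤ 1) :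
    ∫⁻ z, ENNReal.ofReal (Real.exp (t * l * z)) ∂μ ≤ 1 := by
  have hpt : ∀ z, ENNReal.ofReal (Real.exp (t * l * z))
      ≤ ENNReal.ofReal (1 - t) + ENNReal.ofReal t * ENNReal.ofReal (Real.exp (l * z)) := by
    intro z
    have := convexOn_exp.2 (Set.mem_univ 0) (Set.mem_univ (l * z)) (sub_nonneg.2 ht1) ht0
      (sub_add_cancel 1 t)
    rw [← ENNReal.ofReal_mul ht0, ← ENNReal.ofReal_add (sub_nonneg.2 ht1) (by positivity)]
    refine ENNReal.ofReal_le_ofReal ?_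
    simpa [mul_assoc] using this
  calc ∫⁻ z, ENNReal.ofReal (Real.exp (t * l * z)) ∂μ
      ≤ ∫⁻ z, ENNReal.ofReal (1 - t) + ENNReal.ofReal t * ENNReal.ofReal (Real.exp (l * z)) ∂μ :=
        lintegral_mono hpt
    _ = ENNReal.ofReal (1 - t) + ENNReal.ofReal t * ∫⁻ z, ENNReal.ofReal (Real.exp (l * z)) ∂μ := by
        rw [lintegral_add_left measurable_const, lintegral_const, measure_univ, mul_one,
          lintegral_const_mul _ (by fun_prop)]
    _ ≤ ENNReal.ofReal (1 - t) + ENNReal.ofReal t * 1 := by gcongr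
    _ = 1 := by
        rw [mul_one, ← ENNReal.ofReal_add (sub_nonneg.2 ht1) ht0, sub_add_cancel,
          ENNReal.ofReal_one]

noncomputable def atomsWithRest (a : ℕ → ℝ≥0∞) (x : ℕ → ℝ) (y : ℝ) : Measure ℝ :=
  Measure.sum (fun n => a n • Measure.dirac (x n)) + (1 - ∑' n, a n) • Measure.dirac y

section atomsWithRest

variable {a : ℕ → ℝ≥0∞} {x : ℕ → ℝ} {y : ℝ}

theorem lintegral_atomsWithRest (g : ℝ → ℝ≥0∞) :
    ∫⁻ z, g z ∂atomsWithRest a x y = ∑' n, a n * g (x n) + (1 - ∑' n, a n) * g y := by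
  simp [atomsWithRest, lintegral_sum_measure]

theorem isProbabilityMeasure_atomsWithRest (ha : ∑' n, a n ≤ 1) :
    IsProbabilityMeasure (atomsWithRest a x y) := by
  constructor
  simpa [add_tsub_cancel_of_le ha] using lintegral_atomsWithRest (a := a) (x := x) (y := y) 1

theorem atomsWithRest_apply_eq_zero {s : Set ℝ} (hx : ∀ n, x n ∉ s) (hy : y ∉ s) :
    atomsWithRest a x y s = 0 := by
  simp [atomsWithRest, Measure.sum_apply_of_countable, Measure.dirac_apply, hx, hy]

end atomsWithRest

def IsSubPsi (ψ : ℝ → ℝ≥0∞) (μ : Measure ℝ) : Prop :=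
  ∀ l : ℝ, ψ l ≠ ⊤ →
    ∫⁻ z, ENNReal.ofReal (Real.exp (l * z)) ∂μ ≤ ENNReal.ofReal (Real.exp (ψ l).toReal)

theorem lintegral_exp_atomsWithRest_le {a : ℕ → ℝ≥0∞} {x : ℕ → ℝ} {l₀ l : ℝ} {c : ℝ≥0∞}
    (hl₀ : 0 < l₀) (hl : l₀ ≤ l) (hc : ∑' n, a n * ENNReal.ofReal (Real.exp (l * x n)) ≤ c) :
    ∫⁻ z, ENNReal.ofReal (Real.exp (l * z)) ∂atomsWithRest a x (-l₀⁻¹) ≤ c + 2⁻¹ := by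
  have hy : Real.exp (l * -l₀⁻¹) ≤ 2⁻¹ := by
    have : l * -l₀⁻¹ ≤ -1 := by
      rw [mul_neg, ← div_eq_mul_inv, neg_le_neg_iff]
      exact (one_le_div hl₀).2 hl
    calc Real.exp (l * -l₀⁻¹) ≤ Real.exp (-1) := Real.exp_le_exp.2 this
      _ ≤ 2⁻¹ := by simpa using Real.exp_neg_one_lt_half.le
  rw [lintegral_atomsWithRest]
  gcongr
  calc (1 - ∑' n, a n) * ENNReal.ofReal (Real.exp (l * -l₀⁻¹))
      ≤ 1 * ENNReal.ofReal 2⁻¹ := by gcongr; exact tsub_le_self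
    _ = 2⁻¹ := by rw [one_mul, ENNReal.ofReal_inv_of_pos two_pos, ENNReal.ofReal_ofNat]

theorem isSubPsi_atomsWithRest {ψ : ℝ → ℝ≥0∞} (hneg : ∀ l : ℝ, l < 0 → ψ l = ⊤)
    {l₀ : ℝ} (hl₀ : 0 < l₀) (hψl₀ : ψ l₀ ≠ ⊤) {a : ℕ → ℝ≥0∞} {x : ℕ → ℝ}
    (ha_le_one : ∑' n, a n ≤ 1)
    (ha : ∀ l, ψ l ≠ ⊤ → ∑' n, a n * ENNReal.ofReal (Real.exp (l * x n))
      ≤ 2⁻¹ * ENNReal.ofReal (Real.exp ((ψ l).toReal - (ψ l₀).toReal))) :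
    IsSubPsi ψ (atomsWithRest a x (-l₀⁻¹)) := by
  intro l hl
  have hl0 : 0 ≤ l := not_lt.1 fun h => hl (hneg l h)
  have hE : 1 ≤ ENNReal.ofReal (Real.exp (ψ l).toReal) :=
    ENNReal.one_le_ofReal.2 (Real.one_le_exp ENNReal.toReal_nonneg)
  rcases le_or_gt l₀ l with h | h
  · calc ∫⁻ z, ENNReal.ofReal (Real.exp (l * z)) ∂atomsWithRest a x (-l₀⁻¹)
        ≤ 2⁻¹ * ENNReal.ofReal (Real.exp ((ψ l).toReal - (ψ l₀).toReal)) + 2⁻¹ :=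
          lintegral_exp_atomsWithRest_le hl₀ h (ha l hl)
      _ ≤ 2⁻¹ * ENNReal.ofReal (Real.exp (ψ l).toReal)
          + 2⁻¹ * ENNReal.ofReal (Real.exp (ψ l).toReal) := by
          gcongr
          · exact sub_le_self _ ENNReal.toReal_nonneg
          · exact le_mul_of_one_le_right' hE
      _ = ENNReal.ofReal (Real.exp (ψ l).toReal) := by
          rw [← add_mul, ENNReal.inv_two_add_inv_two, one_mul]
  · -- The moment generating function is convex, equal to `1` at `0` and at most `1` at `l₀`.
    have := isProbabilityMeasure_atomsWithRest (x := x) (y := -l₀⁻¹) ha_le_one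
    have h₀ : ∫⁻ z, ENNReal.ofReal (Real.exp (l₀ * z)) ∂atomsWithRest a x (-l₀⁻¹) ≤ 1 := by
      simpa [ENNReal.inv_two_add_inv_two] using
        lintegral_exp_atomsWithRest_le hl₀ le_rfl (ha l₀ hψl₀)
    have := lintegral_exp_mul_le_one_of_le_one (div_nonneg hl0 hl₀.le)
      ((div_le_one hl₀).2 h.le) h₀
    rw [div_mul_cancel₀ _ hl₀.ne'] at this
    exact this.trans hE

noncomputable def conjWeight (ψ : ℝ → ℝ≥0∞) (l₀ : ℝ) (x : ℕ → ℝ) (n : ℕ) : ℝ≥0∞ :=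
  2⁻¹ ^ (n + 2) * ENNReal.ofReal (Real.exp (-(ψ l₀).toReal - (convexConj ψ (x n)).toReal))

section conjWeight

variable {ψ : ℝ → ℝ≥0∞} {l₀ : ℝ} {x : ℕ → ℝ}

theorem tsum_conjWeight_le_one (hψ0 : ψ 0 = 0) : ∑' n, conjWeight ψ l₀ x n ≤ 1 := by
  refine ENNReal.tsum_le_of_le_two_inv_pow_succ_mul fun n => ?_
  have hg : 0 ≤ (convexConj ψ (x n)).toReal := EReal.toReal_nonneg (convexConj_nonneg hψ0 _)
  rw [conjWeight, pow_succ, mul_assoc]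
  gcongr
  calc 2⁻¹ * ENNReal.ofReal (Real.exp (-(ψ l₀).toReal - (convexConj ψ (x n)).toReal))
      ≤ 1 * 1 := by
        gcongr
        · exact ENNReal.inv_le_one.2 one_le_two
        · refine ENNReal.ofReal_le_one.2 (Real.exp_le_one_iff.2 ?_)
          linarith [ENNReal.toReal_nonneg (a := ψ l₀)]
    _ = 1 := one_mul 1

theorem tsum_conjWeight_mul_exp_le (hx : ∀ n, convexConj ψ (x n) ≠ ⊤) {l : ℝ} (hl : ψ l ≠ ⊤) :
    ∑' n, conjWeight ψ l₀ x n * ENNReal.ofReal (Real.exp (l * x n))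
      ≤ 2⁻¹ * ENNReal.ofReal (Real.exp ((ψ l).toReal - (ψ l₀).toReal)) := by
  refine ENNReal.tsum_le_of_le_two_inv_pow_succ_mul fun n => ?_
  rw [conjWeight, pow_succ, mul_assoc, mul_assoc, ← ENNReal.ofReal_mul (Real.exp_nonneg _),
    ← Real.exp_add]
  gcongr
  linarith [mul_le_toReal_add_toReal_convexConj hl (hx n)]

theorem tsum_conjWeight_mul_eq_top {f : ℝ → ℝ}
    (hf : ∀ n, 2 ^ (n + 2) * Real.exp (ψ l₀).toReal
      ≤ |f (x n)| * Real.exp (-(convexConj ψ (x n)).toReal)) :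
    ∑' n, conjWeight ψ l₀ x n * ENNReal.ofReal |f (x n)| = ⊤ := by
  have hterm : ∀ n, 1 ≤ conjWeight ψ l₀ x n * ENNReal.ofReal |f (x n)| := fun n => by
    have hreal : (2 : ℝ) ^ (n + 2)
        ≤ Real.exp (-(ψ l₀).toReal - (convexConj ψ (x n)).toReal) * |f (x n)| := by
      rw [sub_eq_add_neg, Real.exp_add, mul_assoc, mul_comm _ |f (x n)|, Real.exp_neg,
        le_inv_mul_iff₀ (Real.exp_pos _), mul_comm]
      exact hf n
    calc (1 : ℝ≥0∞) = 2⁻¹ ^ (n + 2) * ENNReal.ofReal (2 ^ (n + 2)) := by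
          rw [ENNReal.ofReal_pow zero_le_two, ENNReal.ofReal_ofNat, ← ENNReal.inv_pow,
            ENNReal.inv_mul_cancel (by simp) (by simp)]
      _ ≤ conjWeight ψ l₀ x n * ENNReal.ofReal |f (x n)| := by
          rw [conjWeight, mul_assoc, ← ENNReal.ofReal_mul (Real.exp_nonneg _)]
          gcongr
  exact top_unique <| (ENNReal.tsum_const_eq_top_of_ne_zero one_ne_zero).symm.le.trans
    (ENNReal.tsum_le_tsum hterm)

end conjWeight

theorem stmt_11_general (ψ : ℝ → ℝ≥0∞) (hψ0 : ψ 0 = 0)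
    (hneg : ∀ l : ℝ, l < 0 → ψ l = ⊤)
    (hpos : ∃ l : ℝ, 0 < l ∧ ψ l ≠ ⊤)
    (f : ℝ → ℝ)
    (hunbdd : ∀ C : ℝ, ∃ x : ℝ,
      (⨆ l : ℝ, (((l * x : ℝ)) : EReal) - ((ψ l : ℝ≥0∞) : EReal)) ≠ ⊤ ∧
      C ≤ |f x| * Real.exp
        (-(⨆ l : ℝ, (((l * x : ℝ)) : EReal) - ((ψ l : ℝ≥0∞) : EReal)).toReal)) :
    ∃ μ : Measure ℝ, IsProbabilityMeasure μ ∧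
      (∀ l : ℝ, ψ l ≠ ⊤ →
        ∫⁻ x, ENNReal.ofReal (Real.exp (l * x)) ∂μ
          ≤ ENNReal.ofReal (Real.exp ((ψ l).toReal))) ∧
      μ {x : ℝ | (⨆ l : ℝ, (((l * x : ℝ)) : EReal) - ((ψ l : ℝ≥0∞) : EReal)) = ⊤} = 0 ∧
      ∫⁻ x, ENNReal.ofReal |f x| ∂μ = ⊤ := by
  obtain ⟨l₀, hl₀, hψl₀⟩ := hpos
  choose x hx_fin hx_big using fun n : ℕ => hunbdd (2 ^ (n + 2) * Real.exp (ψ l₀).toReal)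
  have hw := tsum_conjWeight_le_one (l₀ := l₀) (x := x) hψ0
  have hy : convexConj ψ (-l₀⁻¹) ≠ ⊤ :=
    ((convexConj_nonpos hneg (neg_nonpos.2 (inv_nonneg.2 hl₀.le))).trans_lt EReal.zero_lt_top).ne
  refine ⟨atomsWithRest (conjWeight ψ l₀ x) x (-l₀⁻¹), isProbabilityMeasure_atomsWithRest hw,
    isSubPsi_atomsWithRest hneg hl₀ hψl₀ hw fun l hl => tsum_conjWeight_mul_exp_le hx_fin hl,
    atomsWithRest_apply_eq_zero hx_fin hy, ?_⟩
  rw [lintegral_atomsWithRest, tsum_conjWeight_mul_eq_top hx_big, top_add]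

/-- If a measurable `f` satisfies `sup_{x ∈ dom ψ*} |f(x)| e^{-ψ*(x)} = ∞`, then there is a
sub-`ψ` probability measure `μ` (concentrated on `dom ψ*`) with `∫ |f| dμ = ∞`. -/
theorem stmt_11 (ψ : ℝ → ℝ≥0∞) (hψ0 : ψ 0 = 0)
    (hneg : ∀ l : ℝ, l < 0 → ψ l = ⊤)
    (hitv : ∀ l₁ l₂ : ℝ, 0 ≤ l₁ → l₁ ≤ l₂ → ψ l₂ ≠ ⊤ → ψ l₁ ≠ ⊤)
    (hpos : ∃ l : ℝ, 0 < l ∧ ψ l ≠ ⊤)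
    (hconv : ∀ a b t : ℝ, 0 ≤ t → t ≤ 1 →
      ψ (t * a + (1 - t) * b) ≤ ENNReal.ofReal t * ψ a + ENNReal.ofReal (1 - t) * ψ b)
    (f : ℝ → ℝ) (hf : Measurable f)
    (hunbdd : ∀ C : ℝ, ∃ x : ℝ,
      (⨆ l : ℝ, (((l * x : ℝ)) : EReal) - ((ψ l : ℝ≥0∞) : EReal)) ≠ ⊤ ∧
      C ≤ |f x| * Real.exp
        (-(⨆ l : ℝ, (((l * x : ℝ)) : EReal) - ((ψ l : ℝ≥0∞) : EReal)).toReal)) :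
    ∃ μ : Measure ℝ, IsProbabilityMeasure μ ∧
      (∀ l : ℝ, ψ l ≠ ⊤ →
        ∫⁻ x, ENNReal.ofReal (Real.exp (l * x)) ∂μ
          ≤ ENNReal.ofReal (Real.exp ((ψ l).toReal))) ∧
      μ {x : ℝ | (⨆ l : ℝ, (((l * x : ℝ)) : EReal) - ((ψ l : ℝ≥0∞) : EReal)) = ⊤} = 0 ∧
      ∫⁻ x, ENNReal.ofReal |f x| ∂μ = ⊤ :=
  stmt_11_general ψ hψ0 hneg hpos f hunbdd
end

section
/- Let P be the set of Σ-invariant probability measures on X, where Σ is a compact group acting measurably on X with Haar probability measure π. If f is a [-1,∞]-valued measurable function with orbit average f_π ≤ 0 pointwise, then h = 1 + f - f_π is a [0,∞]-valued function satisfying ∫ h dμ = 1 for every μ ∈ P (an exact e-variable). Conversely, for any e-variable h for P, the function f = h - 1 satisfies f_π ≤ 0 pointwise and h ≤ 1 + f - f_π. -/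
open MeasureTheory
open scoped ENNReal

/-! Fubini and the invariance of `μ` give `∫ F_π dμ = ∫ F dμ`, which makes `F + (1 - F_π)`
integrate to exactly `1`. Conversely, the push-forward of the left-invariant probability `π` along the orbit
map `σ ↦ σ • x` is itself an invariant probability measure, and the integral of `h` against it
is `h_π x`; so an e-variable `h` has `h_π ≤ 1` everywhere. -/

namespace MeasureTheory

variable {G X : Type*} [MeasurableSpace G] [MeasurableSpace X]

section SMul

variable [SMul G X]

/-- The paper's `F_π`. -/
noncomputable def orbitAverage (π : Measure G) (F : X → ℝ≥0∞) (x : X) : ℝ≥0∞ :=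
  ∫⁻ σ, F (σ • x) ∂π

variable [MeasurableSMul₂ G X] {π : Measure G} [SFinite π] {F : X → ℝ≥0∞}

theorem measurable_orbitAverage (hF : Measurable F) : Measurable (orbitAverage π F) :=
  ((hF.comp measurable_smul).comp measurable_swap).lintegral_prod_right'

theorem lintegral_orbitAverage (μ : Measure X) [SFinite μ] [SMulInvariantMeasure G X μ]
    (hF : Measurable F) : ∫⁻ x, orbitAverage π F x ∂μ = π Set.univ * ∫⁻ x, F x ∂μ := by
  have hswap : Measurable fun p : X × G => F (p.2 • p.1) :=
    (hF.comp measurable_smul).comp measurable_swap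
  calc ∫⁻ x, orbitAverage π F x ∂μ = ∫⁻ σ, ∫⁻ x, F (σ • x) ∂μ ∂π :=
        lintegral_lintegral_swap hswap.aemeasurable
    _ = ∫⁻ _σ, ∫⁻ x, F x ∂μ ∂π := by
        simp_rw [(measurePreserving_smul _ μ).lintegral_comp hF]
    _ = π Set.univ * ∫⁻ x, F x ∂μ := by rw [lintegral_const, mul_comm]

theorem lintegral_add_one_sub_orbitAverage [IsProbabilityMeasure π] (μ : Measure X)
    [IsProbabilityMeasure μ] [SMulInvariantMeasure G X μ] (hF : Measurable F)
    (hle : ∀ x, orbitAverage π F x ≤ 1) :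
    ∫⁻ x, F x + (1 - orbitAverage π F x) ∂μ = 1 := by
  have hint : ∫⁻ x, orbitAverage π F x ∂μ = ∫⁻ x, F x ∂μ := by
    rw [lintegral_orbitAverage μ hF, measure_univ, one_mul]
  have hF_le : ∫⁻ x, F x ∂μ ≤ 1 := by
    calc ∫⁻ x, F x ∂μ = ∫⁻ x, orbitAverage π F x ∂μ := hint.symm
      _ ≤ ∫⁻ _, 1 ∂μ := lintegral_mono hle
      _ = 1 := by rw [lintegral_const, measure_univ, one_mul]
  rw [lintegral_add_left hF, lintegral_sub (measurable_orbitAverage hF)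
      (hint ▸ ne_top_of_le_ne_top ENNReal.one_ne_top hF_le) (ae_of_all _ hle),
    lintegral_const, measure_univ, mul_one, hint]
  exact add_tsub_cancel_of_le hF_le

end SMul

section MulAction

variable [Group G] [MulAction G X] [MeasurableSMul G X]

instance smulInvariantMeasure_map_smul_const (π : Measure G) [π.IsMulLeftInvariant] (x : X) :
    SMulInvariantMeasure G X (π.map (· • x)) :=
  smulInvariantMeasure_map π _ (fun σ τ => mul_smul σ τ x) (measurable_smul_const x)

theorem orbitAverage_le_one_of_lintegral_le_one (π : Measure G) [IsProbabilityMeasure π]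
    [π.IsMulLeftInvariant] {h : X → ℝ≥0∞} (hh : Measurable h)
    (he : ∀ μ : Measure X, IsProbabilityMeasure μ → SMulInvariantMeasure G X μ →
      ∫⁻ x, h x ∂μ ≤ 1) (x : X) :
    orbitAverage π h x ≤ 1 := by
  have hprob : IsProbabilityMeasure (π.map (· • x)) :=
    Measure.isProbabilityMeasure_map (measurable_smul_const x).aemeasurable
  exact (lintegral_map hh (measurable_smul_const x)).symm.trans_le (he _ hprob inferInstance)

end MulAction

end MeasureTheory

theorem stmt_16_general {G X : Type*} [Group G] [MeasurableSpace G]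
    [MeasurableSpace X] [MulAction G X]
    (hact : Measurable fun p : G × X => p.1 • p.2)
    (π : Measure G) [IsProbabilityMeasure π]
    (hπinv : ∀ g : G, Measure.map (fun h => g * h) π = π) :
    (∀ F : X → ℝ≥0∞, Measurable F → (∀ x, ∫⁻ σ : G, F (σ • x) ∂π ≤ 1) →
      ∀ μ : Measure X, IsProbabilityMeasure μ →
        (∀ σ : G, Measure.map (fun x => σ • x) μ = μ) →
        ∫⁻ x, (F x + (1 - ∫⁻ σ : G, F (σ • x) ∂π)) ∂μ = 1) ∧
    (∀ h : X → ℝ≥0∞, Measurable h →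
      (∀ μ : Measure X, IsProbabilityMeasure μ →
        (∀ σ : G, Measure.map (fun x => σ • x) μ = μ) → ∫⁻ x, h x ∂μ ≤ 1) →
      ∀ x, (∫⁻ σ : G, h (σ • x) ∂π ≤ 1) ∧
        h x ≤ h x + (1 - ∫⁻ σ : G, h (σ • x) ∂π)) := by
  have : MeasurableSMul₂ G X := ⟨hact⟩
  have : π.IsMulLeftInvariant := ⟨hπinv⟩
  refine ⟨fun F hF hle μ _ hμ => ?_, fun h hh he x => ⟨?_, le_self_add⟩⟩
  · have : SMulInvariantMeasure G X μ := ((smulInvariantMeasure_tfae G μ).out 0 5).2 hμ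
    exact lintegral_add_one_sub_orbitAverage μ hF hle
  · exact orbitAverage_le_one_of_lintegral_le_one π hh
      (fun μ hprob _ => he μ hprob fun σ => MeasureTheory.map_smul σ μ) x

/-- E-variables for the `Σ`-invariant hypothesis. Writing `F = 1 + f` for a `[-1,∞]`-valued
measurable `f` (so `F : X → [0,∞]`), the condition `f_π ≤ 0` reads `F_π ≤ 1`, and
`h = 1 + f - f_π = F + (1 - F_π)`. Every such `h` is an exact e-variable:
`∫ h dμ = 1` for every `Σ`-invariant probability `μ`. Conversely, for every e-variable `h`,
the function `f = h - 1` (i.e. `F = h`) satisfies `f_π ≤ 0` pointwise (`h_π ≤ 1`) and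
`h ≤ 1 + f - f_π = h + (1 - h_π)` pointwise. -/
theorem stmt_16 {G X : Type*} [Group G] [TopologicalSpace G] [IsTopologicalGroup G]
    [CompactSpace G] [MeasurableSpace G] [BorelSpace G]
    [MeasurableSpace X] [MulAction G X]
    (hact : Measurable fun p : G × X => p.1 • p.2)
    (π : Measure G) [IsProbabilityMeasure π]
    (hπinv : ∀ g : G, Measure.map (fun h => g * h) π = π) :
    (∀ F : X → ℝ≥0∞, Measurable F → (∀ x, ∫⁻ σ : G, F (σ • x) ∂π ≤ 1) →
      ∀ μ : Measure X, IsProbabilityMeasure μ →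
        (∀ σ : G, Measure.map (fun x => σ • x) μ = μ) →
        ∫⁻ x, (F x + (1 - ∫⁻ σ : G, F (σ • x) ∂π)) ∂μ = 1) ∧
    (∀ h : X → ℝ≥0∞, Measurable h →
      (∀ μ : Measure X, IsProbabilityMeasure μ →
        (∀ σ : G, Measure.map (fun x => σ • x) μ = μ) → ∫⁻ x, h x ∂μ ≤ 1) →
      ∀ x, (∫⁻ σ : G, h (σ • x) ∂π ≤ 1) ∧
        h x ≤ h x + (1 - ∫⁻ σ : G, h (σ • x) ∂π)) :=
  stmt_16_general hact π hπinv
end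

section
/- Let μ be a probability measure on a measurable space X and let f₁,...,f_m be measurable μ-integrable real functions. Then there exists a finitely supported probability measure ν on X (a finite convex combination of Dirac measures) such that ∫ f_i dν = ∫ f_i dμ for all i = 1,...,m. -/
/-! The barycenter `c = ∫ g` of `g = (f₁, …, f_m)` lies in the convex hull `K` of the range of `g`,
by induction on the dimension. If `c ∉ K`, some nonzero functional `L` satisfies `L ≤ L c` on `K`;
as `L ∘ g` has mean `L c`, almost every value of `g` lies on the hyperplane `L = L c`. After
changing `g` on a null set, `g - c` takes values in `ker L`, where the induction hypothesis puts `0`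
in the convex hull of its range, i.e. `c ∈ K`. -/

open MeasureTheory Set

theorem Convex.exists_forall_le_of_notMem {E : Type*} [NormedAddCommGroup E] [NormedSpace ℝ E]
    [FiniteDimensional ℝ E] {K : Set E} (hK : Convex ℝ K) (hne : K.Nonempty) {c : E}
    (hc : c ∉ K) : ∃ L : StrongDual ℝ E, L ≠ 0 ∧ ∀ y ∈ K, L y ≤ L c := by
  by_cases hint : (interior K).Nonempty
  · obtain ⟨L, hL⟩ := geometric_hahn_banach_open_point hK.interior isOpen_interior
      (fun h => hc (interior_subset h))
    obtain ⟨a, ha⟩ := hint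
    refine ⟨L, fun h => by simpa [h] using hL a ha, fun y hy => ?_⟩
    have hy' : y ∈ closure (interior K) :=
      (hK.closure_interior_eq_closure_of_nonempty_interior ⟨a, ha⟩).symm ▸ subset_closure hy
    exact closure_minimal (fun a ha => (hL a ha).le) (isClosed_le L.continuous continuous_const) hy'
  · have hspan : vectorSpan ℝ K < ⊤ := by
      rw [lt_top_iff_ne_top, ← direction_affineSpan, Ne,
        AffineSubspace.direction_eq_top_iff_of_nonempty (hne.mono (subset_affineSpan ℝ K)),
        ← hK.interior_nonempty_iff_affineSpan_eq_top]
      exact hint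
    obtain ⟨f, hf0, hker⟩ := (vectorSpan ℝ K).exists_le_ker_of_lt_top hspan
    obtain ⟨y₀, hy₀⟩ := hne
    have hconst : ∀ y ∈ K, f y = f y₀ := fun y hy => by
      simpa [sub_eq_zero] using hker (vsub_mem_vectorSpan ℝ hy hy₀)
    rcases le_total (f y₀) (f c) with h | h
    · refine ⟨LinearMap.toContinuousLinearMap f, by simpa using hf0, fun y hy => ?_⟩
      simpa [hconst y hy] using h
    · refine ⟨-LinearMap.toContinuousLinearMap f, by simpa using hf0, fun y hy => ?_⟩
      simpa [hconst y hy] using h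

theorem mem_convexHull_range_of_coe_eq_sub {E X : Type*} [AddCommGroup E] [Module ℝ E]
    {V : Submodule ℝ E} {h : X → V} {g : X → E} {c : E} (h0 : 0 ∈ convexHull ℝ (range h))
    (hh : ∀ x, (h x : E) = g x - c) : c ∈ convexHull ℝ (range g) := by
  let φ : V →ᵃ[ℝ] E := V.subtype.toAffineMap + AffineMap.const ℝ V c
  have := mem_image_of_mem φ h0
  rw [AffineMap.image_convexHull, ← range_comp] at this
  simpa [φ, Function.comp_def, hh] using this

theorem exists_fin_weights_of_mem_convexHull_range {E X : Type*} [AddCommGroup E] [Module ℝ E]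
    {g : X → E} {c : E} (hc : c ∈ convexHull ℝ (range g)) :
    ∃ (n : ℕ) (w : Fin n → ℝ) (pts : Fin n → X),
      (∀ j, 0 ≤ w j) ∧ ∑ j, w j = 1 ∧ ∑ j, w j • g (pts j) = c := by
  obtain ⟨ι, _, w, z, hw0, hw1, hz, hwz⟩ := mem_convexHull_iff_exists_fintype.mp hc
  choose pts hpts using hz
  let e := (Fintype.equivFin ι).symm
  refine ⟨Fintype.card ι, w ∘ e, pts ∘ e, fun j => hw0 _, ?_, ?_⟩
  · simpa [e.sum_comp w] using hw1
  · simpa [hpts, e.sum_comp fun i => w i • z i] using hwz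

section Integral

variable {X : Type*} [MeasurableSpace X] {μ : Measure X}

theorem ae_eq_integral_of_ae_le_integral [IsProbabilityMeasure μ] {f : X → ℝ}
    (hf : Integrable f μ) (hle : ∀ᵐ x ∂μ, f x ≤ ∫ y, f y ∂μ) : ∀ᵐ x ∂μ, f x = ∫ y, f y ∂μ :=
  (integral_eq_iff_of_ae_le hf (integrable_const _) hle).mp (by simp)

theorem exists_ae_eq_range_subset_inter {E : Type*} [NeZero μ] {g : X → E} {s : Set E}
    (hs : ∀ᵐ x ∂μ, g x ∈ s) : ∃ g' : X → E, g' =ᵐ[μ] g ∧ range g' ⊆ range g ∩ s := by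
  classical
  obtain ⟨x₀, hx₀⟩ := hs.exists
  refine ⟨fun x => if g x ∈ s then g x else g x₀, hs.mono fun x hx => if_pos hx, ?_⟩
  rintro _ ⟨x, rfl⟩
  dsimp only
  split_ifs with hx
  exacts [⟨mem_range_self x, hx⟩, ⟨mem_range_self x₀, hx₀⟩]

theorem exists_integrable_coe_eq_sub_integral {E : Type*} [NormedAddCommGroup E]
    [NormedSpace ℝ E] [FiniteDimensional ℝ E] [IsProbabilityMeasure μ] (V : Submodule ℝ E)
    {g : X → E} (hg : Integrable g μ) (hgV : ∀ x, g x - ∫ y, g y ∂μ ∈ V) :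
    ∃ h : X → V, Integrable h μ ∧ ∫ x, h x ∂μ = 0 ∧ ∀ x, (h x : E) = g x - ∫ y, g y ∂μ := by
  obtain ⟨P, hP⟩ :=
    Submodule.ClosedComplemented.of_finiteDimensional_quotient V.closed_of_finiteDimensional
  have hgc : Integrable (fun x => g x - ∫ y, g y ∂μ) μ := hg.sub (integrable_const _)
  refine ⟨fun x => P (g x - ∫ y, g y ∂μ), P.integrable_comp hgc, ?_,
    fun x => congrArg Subtype.val (hP ⟨_, hgV x⟩)⟩
  rw [P.integral_comp_comm hgc, integral_sub hg (integrable_const _)]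
  simp

theorem integral_mem_convexHull_range {E : Type*} [NormedAddCommGroup E] [NormedSpace ℝ E]
    [FiniteDimensional ℝ E] [IsProbabilityMeasure μ] {g : X → E} (hg : Integrable g μ) :
    ∫ x, g x ∂μ ∈ convexHull ℝ (range g) := by
  induction hE : Module.finrank ℝ E using Nat.strong_induction_on generalizing E with
  | _ n ih =>
  set c := ∫ x, g x ∂μ
  by_contra hc
  have := nonempty_of_isProbabilityMeasure μ
  obtain ⟨L, hL0, hLc⟩ := (convex_convexHull ℝ (range g)).exists_forall_le_of_notMem
    ((range_nonempty g).mono (subset_convexHull ℝ _)) hc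
  have hLle : ∀ᵐ x ∂μ, L (g x) ≤ ∫ y, L (g y) ∂μ := by
    rw [L.integral_comp_comm hg]
    exact .of_forall fun x => hLc _ (subset_convexHull ℝ _ (mem_range_self x))
  have hLg : ∀ᵐ x ∂μ, L (g x) = L c := by
    simpa only [L.integral_comp_comm hg] using
      ae_eq_integral_of_ae_le_integral (L.integrable_comp hg) hLle
  obtain ⟨g', hg'g, hrange⟩ := exists_ae_eq_range_subset_inter (s := {y | L y = L c}) hLg
  have hg'c : ∫ x, g' x ∂μ = c := integral_congr_ae hg'g
  have hker : ∀ x, g' x - ∫ y, g' y ∂μ ∈ (L : E →ₗ[ℝ] ℝ).ker := fun x => by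
    simpa [hg'c, sub_eq_zero] using (hrange ⟨x, rfl⟩).2
  obtain ⟨h, hint, hzero, hh⟩ :=
    exists_integrable_coe_eq_sub_integral _ (hg.congr hg'g.symm) hker
  have hlt : Module.finrank ℝ (L : E →ₗ[ℝ] ℝ).ker < n := hE ▸ Submodule.finrank_lt
    (mt LinearMap.ker_eq_top.mp (ContinuousLinearMap.coe_injective.ne hL0))
  have h0 := hzero ▸ ih _ hlt hint rfl
  exact hc (convexHull_mono (hrange.trans inter_subset_left)
    (hg'c ▸ mem_convexHull_range_of_coe_eq_sub h0 hh))

end Integral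

theorem integral_sum_smul_dirac {X E ι : Type*} [MeasurableSpace X] [NormedAddCommGroup E]
    [NormedSpace ℝ E] [CompleteSpace E] [Fintype ι] {w : ι → ℝ} (hw : ∀ j, 0 ≤ w j)
    (pts : ι → X) {φ : X → E} (hφ : StronglyMeasurable φ) :
    ∫ x, φ x ∂(∑ j, ENNReal.ofReal (w j) • Measure.dirac (pts j)) = ∑ j, w j • φ (pts j) := by
  rw [integral_finsetSum_measure fun j _ =>
    (integrable_dirac' hφ enorm_lt_top).smul_measure ENNReal.ofReal_ne_top]
  simp [integral_smul_measure, integral_dirac' _ _ hφ, ENNReal.toReal_ofReal (hw _)]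

/-- Barycenter lemma: given a probability measure `μ` and `μ`-integrable measurable
functions `f₁,...,f_m`, there is a finitely supported probability measure (a finite convex
combination of Dirac masses) matching all the integrals `∫ f_i dμ`. -/
theorem stmt_17 {X : Type*} [MeasurableSpace X] (μ : Measure X) [IsProbabilityMeasure μ]
    (m : ℕ) (f : Fin m → X → ℝ)
    (hmeas : ∀ i, Measurable (f i)) (hint : ∀ i, Integrable (f i) μ) :
    ∃ (n : ℕ) (w : Fin n → ℝ) (pts : Fin n → X),
      (∀ j, 0 ≤ w j) ∧ (∑ j, w j = 1) ∧
      ∀ i, ∫ x, f i x ∂(∑ j, (ENNReal.ofReal (w j)) • Measure.dirac (pts j))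
        = ∫ x, f i x ∂μ := by
  obtain ⟨n, w, pts, hw0, hw1, hc⟩ := exists_fin_weights_of_mem_convexHull_range
    (integral_mem_convexHull_range (g := fun x i => f i x) (Integrable.of_eval hint))
  refine ⟨n, w, pts, hw0, hw1, fun i => ?_⟩
  rw [integral_sum_smul_dirac hw0 pts (hmeas i).stronglyMeasurable, ← eval_integral hint i, ← hc]
  simp
end

section
/- Let Φ = {g₁,...,g_d} be a finite set of measurable functions on X, P = {μ probability : each g_i is μ-integrable and ∫ g_i dμ ≤ 0}, and P̃ = {μ probability : ∫ g_i⁺ dμ < ∞ and ∫ g_i dμ ∈ [-∞,0] for all i}. Then every e-variable for P is an e-variable for P̃; i.e., if h : X → [0,∞] is measurable with ∫ h dμ ≤ 1 for all μ ∈ P, then ∫ h dμ ≤ 1 for all μ ∈ P̃. -/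
open MeasureTheory Set
open scoped ENNReal Pointwise

/-!
Truncating `h` at level `n`, it suffices to bound `∫⁻ h ∧ n ∂μ`. Each `g i` lies below an
integrable `G i` with `∫ G i ∂μ ≤ 0`: `g i` itself if its negative part is integrable, otherwise
`g i ∨ (-c)` for a large constant `c`. In finite dimensions the mean of an integrable vector-valued
function lies in the convex hull of its values, so a finite convex combination `ν` of Dirac masses
reproduces the integrals of `h ∧ n` and of all the `G i`. This `ν` satisfies the constraints
defining `P`, hence `∫⁻ h ∧ n ∂μ = ∫⁻ h ∧ n ∂ν ≤ ∫⁻ h ∂ν ≤ 1`.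
-/

section Truncation

variable {X : Type*} [MeasurableSpace X] {μ : Measure X} {f : X → ℝ≥0∞}

theorem lintegral_eq_iSup_lintegral_min_natCast (hf : Measurable f) :
    ∫⁻ x, f x ∂μ = ⨆ n : ℕ, ∫⁻ x, min (f x) n ∂μ := by
  rw [← lintegral_iSup (fun n => hf.min measurable_const)
    fun a b hab x => min_le_min le_rfl (Nat.cast_le.2 hab)]
  refine lintegral_congr fun x => ?_
  rw [← inf_iSup_eq, ENNReal.iSup_natCast, inf_top_eq]

theorem lintegral_min_natCast_ne_top [IsFiniteMeasure μ] (f : X → ℝ≥0∞) (n : ℕ) :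
    ∫⁻ x, min (f x) n ∂μ ≠ ∞ :=
  ne_top_of_le_ne_top (by simp [ENNReal.mul_ne_top, measure_ne_top])
    (lintegral_mono fun x => min_le_right _ _ : _ ≤ ∫⁻ _, (n : ℝ≥0∞) ∂μ)

theorem ofReal_integral_toReal_min_natCast [IsFiniteMeasure μ] (hf : AEMeasurable f μ) (n : ℕ) :
    ENNReal.ofReal (∫ x, (min (f x) n).toReal ∂μ) = ∫⁻ x, min (f x) n ∂μ := by
  rw [integral_toReal (hf.min aemeasurable_const)
    (ae_of_all _ fun x => (min_le_right _ _).trans_lt (ENNReal.natCast_lt_top n)),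
    ENNReal.ofReal_toReal (lintegral_min_natCast_ne_top f n)]

end Truncation

theorem Real.enorm_eq_ofReal_add_ofReal_neg (a : ℝ) :
    ‖a‖ₑ = ENNReal.ofReal a + ENNReal.ofReal (-a) := by
  rcases le_total 0 a with ha | ha
  · simp [Real.enorm_eq_ofReal ha, ENNReal.ofReal_of_nonpos (neg_nonpos.2 ha)]
  · simp [← enorm_neg a, Real.enorm_eq_ofReal (neg_nonneg.2 ha), ENNReal.ofReal_of_nonpos ha]

section ExtendedIntegral

variable {X : Type*} [MeasurableSpace X] {μ : Measure X} {g : X → ℝ}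

theorem integrable_of_lintegral_ofReal_ne_top (hg : AEMeasurable g μ)
    (hpos : ∫⁻ x, ENNReal.ofReal (g x) ∂μ ≠ ∞) (hneg : ∫⁻ x, ENNReal.ofReal (-g x) ∂μ ≠ ∞) :
    Integrable g μ := by
  refine ⟨hg.aestronglyMeasurable, ?_⟩
  rw [HasFiniteIntegral]
  simp_rw [Real.enorm_eq_ofReal_add_ofReal_neg]
  rw [lintegral_add_left' hg.ennreal_ofReal]
  exact ENNReal.add_lt_top.2 ⟨hpos.lt_top, hneg.lt_top⟩

theorem integral_nonpos_of_lintegral_ofReal_le (hg : Integrable g μ)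
    (h : ∫⁻ x, ENNReal.ofReal (g x) ∂μ ≤ ∫⁻ x, ENNReal.ofReal (-g x) ∂μ) :
    ∫ x, g x ∂μ ≤ 0 := by
  rw [integral_eq_lintegral_pos_part_sub_lintegral_neg_part hg, sub_nonpos]
  exact ENNReal.toReal_mono hg.neg.lintegral_lt_top.ne h

theorem exists_integrable_ge_integral_nonpos [IsFiniteMeasure μ] (hg : Measurable g)
    (hpos : ∫⁻ x, ENNReal.ofReal (g x) ∂μ ≠ ∞)
    (hle : ∫⁻ x, ENNReal.ofReal (g x) ∂μ ≤ ∫⁻ x, ENNReal.ofReal (-g x) ∂μ) :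
    ∃ G : X → ℝ, Measurable G ∧ Integrable G μ ∧ ∫ x, G x ∂μ ≤ 0 ∧ ∀ x, g x ≤ G x := by
  by_cases hneg : ∫⁻ x, ENNReal.ofReal (-g x) ∂μ = ∞
  · obtain ⟨c, hc⟩ : ∃ c : ℕ,
        ∫⁻ x, ENNReal.ofReal (g x) ∂μ < ∫⁻ x, min (ENNReal.ofReal (-g x)) c ∂μ := by
      rw [← lt_iSup_iff, ← lintegral_eq_iSup_lintegral_min_natCast
        (f := fun x => ENNReal.ofReal (-g x)) hg.neg.ennreal_ofReal, hneg]
      exact hpos.lt_top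
    have hpos_eq : ∀ x, ENNReal.ofReal (max (g x) (-c)) = ENNReal.ofReal (g x) := fun x => by
      simp [ENNReal.ofReal_of_nonpos (neg_nonpos.2 (Nat.cast_nonneg c))]
    have hneg_eq : ∀ x, ENNReal.ofReal (-max (g x) (-c)) = min (ENNReal.ofReal (-g x)) c :=
      fun x => by simp [← min_neg_neg]
    have hGi : Integrable (fun x => max (g x) (-c)) μ :=
      integrable_of_lintegral_ofReal_ne_top (hg.max measurable_const).aemeasurable
        (by simpa only [hpos_eq] using hpos)
        (by simpa only [hneg_eq] using lintegral_min_natCast_ne_top _ c)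
    refine ⟨_, hg.max measurable_const, hGi, integral_nonpos_of_lintegral_ofReal_le hGi ?_,
      fun x => le_max_left _ _⟩
    simpa only [hpos_eq, hneg_eq] using hc.le
  · have hgi := integrable_of_lintegral_ofReal_ne_top hg.aemeasurable hpos hneg
    exact ⟨g, hg, hgi, integral_nonpos_of_lintegral_ofReal_le hgi hle, fun _ => le_rfl⟩

end ExtendedIntegral

section Barycenter

variable {E : Type*} [NormedAddCommGroup E] [NormedSpace ℝ E] [FiniteDimensional ℝ E]

/- `C + W`, with `W` complementary to the direction of `affineSpan ℝ C`, has nonempty interior, so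
the open Hahn–Banach separation applies to it; being bounded above on `W`, `ℓ` vanishes there. -/
theorem Convex.exists_le_lt_of_mem_affineSpan_of_notMem {C : Set E} (hC : Convex ℝ C) {m : E}
    (hm : m ∈ affineSpan ℝ C) (hmC : m ∉ C) :
    ∃ ℓ : StrongDual ℝ E, (∀ c ∈ C, ℓ c ≤ ℓ m) ∧ ∃ c ∈ C, ℓ c < ℓ m := by
  obtain ⟨c₀, hc₀⟩ : C.Nonempty := by
    rw [nonempty_iff_ne_empty]
    rintro rfl
    exact AffineSubspace.notMem_bot ℝ E m (by simpa using hm)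
  obtain ⟨W, hVW⟩ := Submodule.exists_isCompl (affineSpan ℝ C).direction
  set D := C + (W : Set E)
  have hD : Convex ℝ D := hC.add W.convex
  have hCD : C ⊆ D := fun c hc => ⟨c, hc, 0, W.zero_mem, add_zero c⟩
  have hmD : m ∉ D := by
    rintro ⟨c, hc, w, hw, rfl⟩
    have hwV : w ∈ (affineSpan ℝ C).direction := by
      simpa using AffineSubspace.vsub_mem_direction hm (subset_affineSpan ℝ C hc)
    rw [Submodule.disjoint_def.1 hVW.disjoint w hwV hw] at hmC
    exact hmC (by simpa using hc)
  have hspan : affineSpan ℝ D = ⊤ := by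
    refine (AffineSubspace.direction_eq_top_iff_of_nonempty
      ((affineSpan_nonempty ℝ).2 ⟨c₀, hCD hc₀⟩)).mp (eq_top_iff.2 ?_)
    rw [← hVW.sup_eq_top]
    refine sup_le (AffineSubspace.direction_le (affineSpan_mono ℝ hCD)) fun w hw => ?_
    simpa using AffineSubspace.vsub_mem_direction
      (subset_affineSpan ℝ D ⟨c₀, hc₀, w, hw, rfl⟩) (subset_affineSpan ℝ D (hCD hc₀))
  have hint : (interior D).Nonempty := hD.interior_nonempty_iff_affineSpan_eq_top.2 hspan
  obtain ⟨ℓ, hℓ⟩ := geometric_hahn_banach_open_point hD.interior isOpen_interior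
    (fun h => hmD (interior_subset h))
  have hle : ∀ x ∈ D, ℓ x ≤ ℓ m := fun x hx =>
    closure_minimal (fun y hy => (hℓ y hy).le) (isClosed_le ℓ.continuous continuous_const)
      ((hD.closure_interior_eq_closure_of_nonempty_interior hint).symm ▸ subset_closure hx)
  have hW : ∀ w ∈ W, ℓ w = 0 := by
    intro w hw
    by_contra hne
    have := hle (c₀ + ((ℓ m - ℓ c₀ + 1) / ℓ w) • w) ⟨c₀, hc₀, _, W.smul_mem _ hw, rfl⟩
    rw [map_add, map_smul, smul_eq_mul, div_mul_cancel₀ _ hne] at this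
    linarith
  obtain ⟨y, hy⟩ := hint
  obtain ⟨c, hc, w, hw, rfl⟩ := interior_subset hy
  refine ⟨ℓ, fun c hc => hle c (hCD hc), c, hc, ?_⟩
  simpa [hW w hw] using hℓ _ hy

/- If the mean `m` is outside the hull, a functional `ℓ` supporting the hull at `m` but not constant
on it satisfies `ℓ ∘ f = ℓ m` a.e.; shrinking `s` to this level set lowers the dimension of the
affine span of `f '' s`. -/
theorem integral_mem_convexHull_image {X : Type*} [MeasurableSpace X] {μ : Measure X}
    [IsProbabilityMeasure μ] {f : X → E} (hf : Integrable f μ) {s : Set X}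
    (hs : ∀ᵐ x ∂μ, x ∈ s) :
    ∫ x, f x ∂μ ∈ convexHull ℝ (f '' s) := by
  induction hn : Module.finrank ℝ (affineSpan ℝ (f '' s)).direction using Nat.strong_induction_on
    generalizing s with
  | _ n ih =>
  set m := ∫ x, f x ∂μ
  by_contra hmC
  have hmA : m ∈ affineSpan ℝ (convexHull ℝ (f '' s)) := by
    rw [affineSpan_convexHull]
    exact (affineSpan ℝ (f '' s)).convex.integral_mem
      (AffineSubspace.closed_of_finiteDimensional _)
      (hs.mono fun x hx => subset_affineSpan ℝ _ (mem_image_of_mem f hx)) hf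
  obtain ⟨ℓ, hle, c, hc, hlt⟩ :=
    (convex_convexHull ℝ _).exists_le_lt_of_mem_affineSpan_of_notMem hmA hmC
  have hfle : ∀ x ∈ s, ℓ (f x) ≤ ℓ m := fun x hx =>
    hle _ (subset_convexHull ℝ _ (mem_image_of_mem f hx))
  have hae : ∀ᵐ x ∂μ, ℓ (f x) = ℓ m := by
    have hgap : Integrable (fun x => ℓ m - ℓ (f x)) μ :=
      (integrable_const _).sub (ℓ.integrable_comp hf)
    have h0 : ∫ x, (ℓ m - ℓ (f x)) ∂μ = 0 := by
      rw [integral_sub (integrable_const _) (ℓ.integrable_comp hf), ℓ.integral_comp_comm hf]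
      simp [m]
    filter_upwards [(integral_eq_zero_iff_of_nonneg_ae
      (hs.mono fun x hx => sub_nonneg.2 (hfle x hx)) hgap).1 h0] with x hx
    exact (sub_eq_zero.1 hx).symm
  set s' := s ∩ {x | ℓ (f x) = ℓ m}
  have hs' : ∀ᵐ x ∂μ, x ∈ s' := hs.and hae
  have hlt' : affineSpan ℝ (f '' s') < affineSpan ℝ (f '' s) := by
    refine lt_of_le_of_ne (affineSpan_mono ℝ (image_mono inter_subset_left)) fun heq => hlt.ne ?_
    have hlevel :
        affineSpan ℝ (f '' s') ≤ (affineSpan ℝ {ℓ m}).comap ℓ.toLinearMap.toAffineMap := by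
      rw [affineSpan_le]
      rintro _ ⟨x, hx, rfl⟩
      simpa using hx.2
    simpa using hlevel (heq ▸ convexHull_subset_affineSpan _ hc)
  have hne : (f '' s').Nonempty := Set.Nonempty.image f hs'.exists
  refine hmC (convexHull_mono (image_mono inter_subset_left) (ih _ ?_ hs' rfl))
  exact hn ▸ Submodule.finrank_lt_finrank_of_lt
    (AffineSubspace.direction_lt_of_nonempty hlt' ((affineSpan_nonempty ℝ).2 hne))

end Barycenter

section DiracCombination

variable {X κ : Type*} [MeasurableSpace X] [Fintype κ] (w : κ → ℝ) (p : κ → X)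

theorem isProbabilityMeasure_sum_smul_dirac (hw₀ : ∀ k, 0 ≤ w k) (hw₁ : ∑ k, w k = 1) :
    IsProbabilityMeasure (∑ k, ENNReal.ofReal (w k) • Measure.dirac (p k)) := by
  constructor
  simp [← ENNReal.ofReal_sum_of_nonneg fun k _ => hw₀ k, hw₁]

theorem integrable_smul_dirac (c : ℝ) (x : X) {φ : X → ℝ} (hφ : Measurable φ) :
    Integrable φ (ENNReal.ofReal c • Measure.dirac x) :=
  (integrable_dirac' hφ.stronglyMeasurable enorm_lt_top).smul_measure ENNReal.ofReal_ne_top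

theorem integrable_sum_smul_dirac {φ : X → ℝ} (hφ : Measurable φ) :
    Integrable φ (∑ k, ENNReal.ofReal (w k) • Measure.dirac (p k)) :=
  integrable_finsetSum_measure.2 fun k _ => integrable_smul_dirac (w k) (p k) hφ

theorem integral_sum_smul_dirac_s18 (hw₀ : ∀ k, 0 ≤ w k) {φ : X → ℝ} (hφ : Measurable φ) :
    ∫ x, φ x ∂(∑ k, ENNReal.ofReal (w k) • Measure.dirac (p k)) = ∑ k, w k * φ (p k) := by
  rw [integral_finsetSum_measure fun k _ => integrable_smul_dirac (w k) (p k) hφ]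
  refine Finset.sum_congr rfl fun k _ => ?_
  rw [integral_smul_measure, integral_dirac' _ _ hφ.stronglyMeasurable,
    ENNReal.toReal_ofReal (hw₀ k), smul_eq_mul]

end DiracCombination

theorem exists_isProbabilityMeasure_integral_eq {X ι : Type*} [MeasurableSpace X] [Fintype ι]
    {μ : Measure X} [IsProbabilityMeasure μ] {F : ι → X → ℝ} (hFm : ∀ j, Measurable (F j))
    (hFi : ∀ j, Integrable (F j) μ) :
    ∃ ν : Measure X, IsProbabilityMeasure ν ∧ (∀ φ : X → ℝ, Measurable φ → Integrable φ ν) ∧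
      ∀ j, ∫ x, F j x ∂ν = ∫ x, F j x ∂μ := by
  have hmem := integral_mem_convexHull_image (Integrable.of_eval hFi) (ae_of_all μ (mem_univ))
  rw [image_univ] at hmem
  obtain ⟨κ, _, w, z, hw₀, hw₁, hz, hsum⟩ := mem_convexHull_iff_exists_fintype.1 hmem
  choose p hp using hz
  refine ⟨_, isProbabilityMeasure_sum_smul_dirac w p hw₀ hw₁,
    fun φ hφ => integrable_sum_smul_dirac w p hφ, fun j => ?_⟩
  rw [integral_sum_smul_dirac_s18 w p hw₀ (hFm j), ← eval_integral hFi j, ← hsum]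
  simp [← hp]

/-- For a finite constraint set `Φ = {g₁,...,g_d}`, every e-variable for the generated
hypothesis `P` is also an e-variable for the relaxed hypothesis `P̃`, in which each `g_i`
is only required to have integrable positive part and extended integral in `[-∞,0]`. -/
theorem stmt_18 {X : Type*} [MeasurableSpace X] (d : ℕ) (g : Fin d → X → ℝ)
    (hg : ∀ i, Measurable (g i))
    (h : X → ℝ≥0∞) (hh : Measurable h)
    (hE : ∀ μ : Measure X, IsProbabilityMeasure μ →
      (∀ i, Integrable (g i) μ ∧ ∫ x, g i x ∂μ ≤ 0) → ∫⁻ x, h x ∂μ ≤ 1) :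
    ∀ μ : Measure X, IsProbabilityMeasure μ →
      (∀ i, (∫⁻ x, ENNReal.ofReal (g i x) ∂μ ≠ ⊤) ∧
        ∫⁻ x, ENNReal.ofReal (g i x) ∂μ ≤ ∫⁻ x, ENNReal.ofReal (-(g i x)) ∂μ) →
      ∫⁻ x, h x ∂μ ≤ 1 := by
  intro μ hμ hcon
  choose G hGm hGi hGint hGle using
    fun i => exists_integrable_ge_integral_nonpos (hg i) (hcon i).1 (hcon i).2
  rw [lintegral_eq_iSup_lintegral_min_natCast hh]
  refine iSup_le fun n => ?_
  have hHm : Measurable fun x => (min (h x) n).toReal := (hh.min measurable_const).ennreal_toReal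
  have hHi : Integrable (fun x => (min (h x) n).toReal) μ :=
    integrable_toReal_of_lintegral_ne_top (hh.min measurable_const).aemeasurable
      (lintegral_min_natCast_ne_top h n)
  obtain ⟨ν, hν, hνi, hνF⟩ := exists_isProbabilityMeasure_integral_eq
    (F := fun j : Option (Fin d) => j.elim (fun x => (min (h x) n).toReal) G)
    (by rintro (_ | i); exacts [hHm, hGm i])
    (by rintro (_ | i); exacts [hHi, hGi i])
  have hνP : ∫⁻ x, h x ∂ν ≤ 1 := hE ν hν fun i => ⟨hνi _ (hg i),
    (integral_mono (hνi _ (hg i)) (hνi _ (hGm i)) (hGle i)).trans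
      ((hνF (some i)).trans_le (hGint i))⟩
  calc ∫⁻ x, min (h x) n ∂μ = ∫⁻ x, min (h x) n ∂ν := by
        rw [← ofReal_integral_toReal_min_natCast hh.aemeasurable,
          ← ofReal_integral_toReal_min_natCast hh.aemeasurable]
        exact congrArg ENNReal.ofReal (hνF none).symm
    _ ≤ ∫⁻ x, h x ∂ν := lintegral_mono fun x => min_le_left _ _
    _ ≤ 1 := hνP
end

section
/- There exists a countable constraint set Φ on X = ℕ such that the generated hypothesis P(Φ) is a singleton {μ} with μ({x}) = 2^{-x}, but after adding the negative constraint function f₀(x) = -2^x, the generated hypothesis P(Φ ∪ {f₀}) is empty. Concretely: with f_n(x) = 1 for x ≠ n and f_n(n) = 1 - 2^n, the only probability measure μ on ℕ with ∫ f_n dμ ≤ 0 for all n ∈ ℕ is μ = Σ_x 2^{-x} δ_x, and this μ satisfies ∫ 2^x dμ = ∞, so no probability measure integrates f₀ and satisfies all constraints. -/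
/-!
The constraint `∫ f_n dμ ≤ 0` says exactly `μ {n} ≥ 2⁻ⁿ`. These lower bounds already sum to `1`,
so a probability measure can only meet all of them with equality. Then `2ˣ μ {x} = 1` for every
`x`, so `∫ 2ˣ dμ = ∞` and `-2ˣ` is not integrable.
-/

open MeasureTheory
open scoped ENNReal

instance : MeasurableSpace ℕ+ := ⊤

theorem tsum_inv_two_pow_pnat : ∑' n : ℕ+, (2⁻¹ : ℝ≥0∞) ^ (n : ℕ) = 1 := by
  rw [tsum_pnat_eq_tsum_succ (f := fun n => (2⁻¹ : ℝ≥0∞) ^ n), ENNReal.tsum_geometric_add_one,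
    ENNReal.one_sub_inv_two, inv_inv, ENNReal.inv_mul_cancel two_ne_zero ENNReal.ofNat_ne_top]

section

variable {α : Type*} [MeasurableSpace α] [MeasurableSingletonClass α]
  (μ : Measure α) [IsProbabilityMeasure μ]

theorem integral_ite_eq_one_sub_mul_measureReal [DecidableEq α] (a : α) (c : ℝ) :
    ∫ x, (if x = a then 1 - c else 1) ∂μ = 1 - c * μ.real {a} := by
  have hfun : (fun x => if x = a then 1 - c else 1)
      = fun x => 1 - ({a} : Set α).indicator (fun _ => c) x := by
    funext x
    by_cases hx : x = a <;> simp [hx]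
  rw [hfun, integral_sub (integrable_const 1)
      ((integrable_const c).indicator (measurableSet_singleton a)),
    integral_const, integral_indicator_const _ (measurableSet_singleton a)]
  simp [mul_comm]

theorem ofReal_inv_le_measure_singleton [DecidableEq α] {a : α} {c : ℝ} (hc : 0 < c)
    (h : ∫ x, (if x = a then 1 - c else 1) ∂μ ≤ 0) : ENNReal.ofReal c⁻¹ ≤ μ {a} := by
  rw [integral_ite_eq_one_sub_mul_measureReal] at h
  refine ENNReal.ofReal_le_of_le_toReal ?_
  rw [inv_le_iff_one_le_mul₀' hc]
  exact le_of_sub_nonpos h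

theorem measure_singleton_eq_of_le_of_tsum_eq_one [Countable α] {p : α → ℝ≥0∞}
    (hp : ∑' x, p x = 1) (hle : ∀ x, p x ≤ μ {x}) (x : α) : μ {x} = p x := by
  refine ((hle x).eq_or_lt.resolve_right fun hlt => ?_).symm
  have htotal : ∑' y, μ {y} = 1 := by
    simpa using Measure.tsum_indicator_apply_singleton μ Set.univ MeasurableSet.univ
  have := ENNReal.tsum_lt_tsum (hp ▸ ENNReal.one_ne_top) hle hlt
  rw [hp, htotal] at this
  exact this.false

end

theorem measure_singleton_eq_inv_two_pow (μ : Measure ℕ+) [IsProbabilityMeasure μ]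
    (h : ∀ n : ℕ+, ∫ x, (if x = n then (1 : ℝ) - 2 ^ (n : ℕ) else 1) ∂μ ≤ 0) (n : ℕ+) :
    μ {n} = 2⁻¹ ^ (n : ℕ) := by
  refine measure_singleton_eq_of_le_of_tsum_eq_one μ tsum_inv_two_pow_pnat (fun m => ?_) n
  have hm := ofReal_inv_le_measure_singleton μ (pow_pos two_pos _) (h m)
  rwa [← inv_pow, ENNReal.ofReal_pow (by norm_num), ENNReal.ofReal_inv_of_pos two_pos,
    ENNReal.ofReal_ofNat] at hm

theorem lintegral_ofReal_two_pow_eq_top {μ : Measure ℕ+}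
    (hμ : ∀ n : ℕ+, μ {n} = 2⁻¹ ^ (n : ℕ)) :
    ∫⁻ n, ENNReal.ofReal ((2 : ℝ) ^ (n : ℕ)) ∂μ = ⊤ := by
  have hterm : ∀ n : ℕ+, ENNReal.ofReal ((2 : ℝ) ^ (n : ℕ)) * μ {n} = 1 := fun n => by
    rw [hμ, ENNReal.ofReal_pow zero_le_two, ENNReal.ofReal_ofNat, ← mul_pow,
      ENNReal.mul_inv_cancel two_ne_zero ENNReal.ofNat_ne_top, one_pow]
  rw [lintegral_countable', tsum_congr hterm]
  exact ENNReal.tsum_const_eq_top_of_ne_zero one_ne_zero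

/-- On `X = ℕ = {1,2,...}`, with constraint functions `f_n(x) = 1` for `x ≠ n` and
`f_n(n) = 1 - 2ⁿ`, the only probability measure `μ` satisfying `∫ f_n dμ ≤ 0` for all `n`
is `μ = Σ_x 2^{-x} δ_x`; this `μ` satisfies `∫ 2^x dμ = ∞`, so after adding the negative
constraint `f₀(x) = -2^x` the generated hypothesis becomes empty. -/
theorem stmt_19 :
    (∀ μ : Measure ℕ+, IsProbabilityMeasure μ →
      (∀ n : ℕ+, Integrable (fun x : ℕ+ => if x = n then (1 : ℝ) - 2 ^ (n : ℕ) else 1) μ ∧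
        ∫ x, (if x = n then (1 : ℝ) - 2 ^ (n : ℕ) else 1) ∂μ ≤ 0) →
      (∀ x : ℕ+, μ {x} = 2⁻¹ ^ (x : ℕ)) ∧
        ∫⁻ x, ENNReal.ofReal ((2 : ℝ) ^ (x : ℕ)) ∂μ = ⊤) ∧
    ¬ ∃ μ : Measure ℕ+, IsProbabilityMeasure μ ∧
      (∀ n : ℕ+, Integrable (fun x : ℕ+ => if x = n then (1 : ℝ) - 2 ^ (n : ℕ) else 1) μ ∧
        ∫ x, (if x = n then (1 : ℝ) - 2 ^ (n : ℕ) else 1) ∂μ ≤ 0) ∧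
      Integrable (fun x : ℕ+ => -(2 : ℝ) ^ (x : ℕ)) μ ∧
      ∫ x, (-(2 : ℝ) ^ (x : ℕ)) ∂μ ≤ 0 := by
  refine ⟨fun μ _ h => ?_, ?_⟩
  · have hμ := measure_singleton_eq_inv_two_pow μ fun n => (h n).2
    exact ⟨hμ, lintegral_ofReal_two_pow_eq_top hμ⟩
  · rintro ⟨μ, _, h, hint, -⟩
    have hfinite := hint.neg.lintegral_lt_top
    simp only [Pi.neg_apply, neg_neg] at hfinite
    exact hfinite.ne (lintegral_ofReal_two_pow_eq_top
      (measure_singleton_eq_inv_two_pow μ fun n => (h n).2))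
end
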